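/- Padding reduction from MPS testing to Schmidt-rank testing (Lemma lemma-416002): Let n ≥ 2, r ≥ 1, d ≥ 1, ε ∈ (0, 1], and 0 ≤ s < c ≤ 1. If there exists a (c,s)-tester with sample complexity N for the property MPS(r,n)_ε of n-partite pure states — whose yes-set is MPS(r,n) and whose no-set is the set of unit n-partite vectors Ψ with d_tr(ΨΨ†, ΦΦ†) ≥ ε for every Φ ∈ MPS(r,n) — then there exists a (c,s)-tester with sample complexity N for the bipartite property SchmidtRank(r)_ε, whose yes-set is the set of unit vectors in (Fin d × Fin d) → ℂ of Schmidt rank at most r and whose no-set is the set of unit vectors ψ with d_tr(ψψ†, φφ†) ≥ ε for every unit φ of Schmidt rank at most r. -/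

import Mathlib

open scoped ComplexConjugate ComplexOrder Kronecker Matrix
open MeasureTheory

namespace PaperStmt

/-- The rank-one matrix `ψψ†` associated with a vector `ψ`. -/
noncomputable def outer {ι : Type*} (ψ : ι → ℂ) : Matrix ι ι ℂ :=
  Matrix.of fun x y => ψ x * conj (ψ y)

/-- The `N`-fold tensor power of a square matrix `ρ`. -/
noncomputable def tpow {ι : Type*} (ρ : Matrix ι ι ℂ) (N : ℕ) : Matrix (Fin N → ι) (Fin N → ι) ℂ :=
  Matrix.of fun x y => ∏ i, ρ (x i) (y i)

/-- `ψ` is a unit vector (for the ℓ² norm). -/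
def IsUnitVec {ι : Type*} [Fintype ι] (ψ : ι → ℂ) : Prop :=
  ∑ x, Complex.normSq (ψ x) = 1

/-- `0 ⊑ T ⊑ 1` in the Loewner order. -/
def IsTester {κ : Type*} [Fintype κ] [DecidableEq κ] (T : Matrix κ κ ℂ) : Prop :=
  T.PosSemidef ∧ ((1 : Matrix κ κ ℂ) - T).PosSemidef

/-- `ρ` is a density matrix: positive semidefinite with unit trace. -/
def IsDensity {ι : Type*} [Fintype ι] (ρ : Matrix ι ι ℂ) : Prop :=
  ρ.PosSemidef ∧ ρ.trace = 1

/-- The acceptance probability `tr (T · ρ^{⊗N})` of a tester `T` on `N` samples of `ρ`. -/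
noncomputable def acc {ι : Type*} [Fintype ι] {N : ℕ}
    (T : Matrix (Fin N → ι) (Fin N → ι) ℂ) (ρ : Matrix ι ι ℂ) : ℝ :=
  ((T * tpow ρ N).trace).re

/-- The trace distance `½ ∑ᵢ |λᵢ(ρ - σ)|` between (Hermitian) matrices. -/
noncomputable def traceDist {κ : Type*} [Fintype κ] [DecidableEq κ]
    (ρ σ : Matrix κ κ ℂ) : ℝ :=
  if h : (ρ - σ).IsHermitian then (1 / 2) * ∑ i, |h.eigenvalues i| else 0

/-- The local tester on `H_A` determined by a matrix `M` acting on Alice's registers. -/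
noncomputable def localA {d N : ℕ} (M : Matrix (Fin N → Fin d) (Fin N → Fin d) ℂ) :
    Matrix (Fin N → Fin d × Fin d) (Fin N → Fin d × Fin d) ℂ :=
  Matrix.of fun x y =>
    M (fun i => (x i).1) (fun i => (y i).1) *
      (if (fun i => (x i).2) = (fun i => (y i).2) then 1 else 0)

/-- The vector `(I ⊗ U) ψ` : the unitary `U` applied to the `B` part of `ψ`. -/
noncomputable def applyB {d : ℕ} (U : Matrix (Fin d) (Fin d) ℂ) (ψ : Fin d × Fin d → ℂ) :
    Fin d × Fin d → ℂ :=
  fun p => ∑ k, U p.2 k * ψ (p.1, k)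

/-- The partial trace over the second (`B`) tensor factor. -/
noncomputable def ptraceB {d : ℕ} (M : Matrix (Fin d × Fin d) (Fin d × Fin d) ℂ) :
    Matrix (Fin d) (Fin d) ℂ :=
  Matrix.of fun a b => ∑ j, M (a, j) (b, j)


/-- The Schmidt rank of a bipartite vector: the rank of its coefficient matrix. -/
noncomputable def schmidtRank {d : ℕ} (ψ : Fin d × Fin d → ℂ) : ℕ :=
  (Matrix.of fun i j : Fin d => ψ (i, j)).rank

/-- `Ψ` is a matrix product state of bond dimension `r` (open boundary conditions):
`Ψ i = A₁ (i 1) * A₂ (i 2) * ⋯ * Aₙ (i n)` with `A₁` of size `1 × r`, `Aₙ` of size `r × 1`,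
and `r × r` matrices in between. -/
def IsMPS (n r d : ℕ) (hn : 0 < n) (Ψ : (Fin n → Fin d) → ℂ) : Prop :=
  ∃ (A₁ : Fin d → Matrix (Fin 1) (Fin r) ℂ)
    (A : Fin n → Fin d → Matrix (Fin r) (Fin r) ℂ)
    (Aₙ : Fin d → Matrix (Fin r) (Fin 1) ℂ),
    ∀ i : Fin n → Fin d,
      Ψ i =
        (A₁ (i ⟨0, hn⟩) *
          (List.map (fun j => A j (i j)) (((List.finRange n).drop 1).dropLast)).prod *
          Aₙ (i ⟨n - 1, Nat.sub_lt hn Nat.one_pos⟩)) 0 0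

set_option linter.unusedSectionVars false
set_option maxHeartbeats 1600000

/-! ### Auxiliary lemmas -/

lemma sum_dite_fin {r k : ℕ} (hk : k ≤ r) (g : Fin k → ℂ) :
    ∑ l : Fin r, (if h : (l : ℕ) < k then g ⟨l, h⟩ else 0) = ∑ l : Fin k, g l := by
  set F : ℕ → ℂ := fun m => if h : m < k then g ⟨m, h⟩ else 0 with hF
  have h1 : ∑ l : Fin r, (if h : (l : ℕ) < k then g ⟨l, h⟩ else 0) = ∑ m ∈ Finset.range r, F m := by
    rw [← Fin.sum_univ_eq_sum_range]
  have h2 : ∑ m ∈ Finset.range k, F m = ∑ m ∈ Finset.range r, F m := by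
    apply Finset.sum_subset (Finset.range_subset_range.2 hk)
    intro x _ hx
    simp only [Finset.mem_range, not_lt] at hx
    simp [hF, Nat.not_lt.2 hx]
  have h3 : ∑ m ∈ Finset.range k, F m = ∑ l : Fin k, g l := by
    rw [← Fin.sum_univ_eq_sum_range]
    exact Finset.sum_congr rfl fun l _ => by simp [hF]
  rw [h1, ← h2, h3]

lemma rank_factor {d r : ℕ} (M : Matrix (Fin d) (Fin d) ℂ) (h : M.rank ≤ r) :
    ∃ (B : Matrix (Fin d) (Fin r) ℂ) (C : Matrix (Fin r) (Fin d) ℂ), M = B * C := by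
  classical
  set V := LinearMap.range M.mulVecLin with hV
  have hk : Module.finrank ℂ V ≤ r := h
  set k := Module.finrank ℂ V with hkdef
  let b : Module.Basis (Fin k) ℂ V := Module.finBasis ℂ V
  have hcol : ∀ j, M *ᵥ Pi.single j 1 ∈ V := fun j => ⟨Pi.single j 1, rfl⟩
  let col : Fin d → V := fun j => ⟨M *ᵥ Pi.single j 1, hcol j⟩
  refine ⟨Matrix.of fun i l => if h : (l : ℕ) < k then ((b ⟨l, h⟩ : V) : Fin d → ℂ) i else 0,
    Matrix.of fun l j => if h : (l : ℕ) < k then b.repr (col j) ⟨l, h⟩ else 0, ?_⟩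
  ext i j
  rw [Matrix.mul_apply]
  have hterm : ∀ l : Fin r,
      (Matrix.of fun (i : Fin d) (l : Fin r) =>
        if h : (l : ℕ) < k then ((b ⟨l, h⟩ : V) : Fin d → ℂ) i else 0) i l *
      (Matrix.of fun (l : Fin r) (j : Fin d) =>
        if h : (l : ℕ) < k then (b.repr (col j) ⟨l, h⟩ : ℂ) else 0) l j
      = if h : (l : ℕ) < k then
          ((b ⟨l, h⟩ : V) : Fin d → ℂ) i * b.repr (col j) ⟨l, h⟩ else 0 := by
    intro l
    by_cases hl : (l : ℕ) < k <;> simp [hl]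
  have hsd := sum_dite_fin hk (fun l' : Fin k => ((b l' : V) : Fin d → ℂ) i * b.repr (col j) l')
  rw [Finset.sum_congr rfl fun l _ => hterm l, hsd]
  have hrepr := b.sum_repr (col j)
  have hco := congrArg (fun v : V => (v : Fin d → ℂ) i) hrepr
  simp only [AddSubmonoidClass.coe_finset_sum, SetLike.val_smul, Finset.sum_apply,
    Pi.smul_apply, smul_eq_mul] at hco
  have hcv : (col j : Fin d → ℂ) i = M i j := by
    simp [col, Matrix.mulVec_single]
  rw [← hcv, ← hco]
  exact Finset.sum_congr rfl fun l _ => mul_comm _ _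

noncomputable def ip {ι : Type*} [Fintype ι] (u v : ι → ℂ) : ℂ := ∑ x, conj (u x) * v x

section TD
variable {ι : Type*} [Fintype ι] [DecidableEq ι]

lemma outer_isHermitian (u : ι → ℂ) : (outer u).IsHermitian := by
  ext i j
  simp [outer, Matrix.conjTranspose_apply, mul_comm]

lemma trace_outer_mul_outer (a b : ι → ℂ) :
    (outer a * outer b).trace = ip b a * ip a b := by
  have key : ∀ x : ι, (outer a * outer b) x x = (conj (b x) * a x) * ip a b := by
    intro x
    simp only [Matrix.mul_apply, outer, Matrix.of_apply, ip, Finset.mul_sum]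
    exact Finset.sum_congr rfl fun y _ => by ring
  simp only [Matrix.trace, Matrix.diag, key, ← Finset.sum_mul, ip]

lemma trace_outer (u : ι → ℂ) (hu : IsUnitVec u) : (outer u).trace = 1 := by
  simp only [Matrix.trace, Matrix.diag, outer, Matrix.of_apply]
  have : ∀ x, u x * conj (u x) = (Complex.normSq (u x) : ℂ) := by
    intro x; rw [Complex.mul_conj]
  rw [Finset.sum_congr rfl fun x _ => this x, ← Complex.ofReal_sum, hu, Complex.ofReal_one]

lemma trace_eq_sum_eigs {A : Matrix ι ι ℂ} (hA : A.IsHermitian) :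
    A.trace = ∑ i, (hA.eigenvalues i : ℂ) := by
  conv_lhs => rw [hA.spectral_theorem, Unitary.conjStarAlgAut_apply]
  rw [Matrix.trace_mul_cycle,
    Matrix.mem_unitaryGroup_iff'.mp (Matrix.IsHermitian.eigenvectorUnitary hA).2, Matrix.one_mul,
    Matrix.trace_diagonal]
  rfl

lemma trace_sq_eq_sum_eigs_sq {A : Matrix ι ι ℂ} (hA : A.IsHermitian) :
    (A * A).trace = ∑ i, (hA.eigenvalues i : ℂ) ^ 2 := by
  set U := (Matrix.IsHermitian.eigenvectorUnitary hA : Matrix ι ι ℂ) with hU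
  have hUU : star U * U = 1 := Matrix.mem_unitaryGroup_iff'.mp
    (Matrix.IsHermitian.eigenvectorUnitary hA).2
  have hD := hA.spectral_theorem
  rw [Unitary.conjStarAlgAut_apply] at hD
  set D := Matrix.diagonal ((RCLike.ofReal ∘ hA.eigenvalues : ι → ℂ)) with hDdef
  have : A * A = U * (D * D) * star U := by
    rw [hD]
    calc U * D * star U * (U * D * star U) = U * D * (star U * U) * D * star U := by
          simp only [Matrix.mul_assoc]
      _ = U * (D * D) * star U := by rw [hUU]; simp only [Matrix.mul_one, Matrix.mul_assoc]
  rw [this, Matrix.trace_mul_cycle, ← Matrix.mul_assoc, hUU, Matrix.one_mul, hDdef,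
    Matrix.diagonal_mul_diagonal, Matrix.trace_diagonal]
  simp [pow_two]

lemma rank_outer_sub_le (u v : ι → ℂ) : (outer u - outer v).rank ≤ 2 := by
  classical
  have hle : LinearMap.range (outer u - outer v).mulVecLin ≤
      Submodule.span ℂ ({u, v} : Set (ι → ℂ)) := by
    rintro x ⟨y, rfl⟩
    have hw : ∀ (w : ι → ℂ), (outer w) *ᵥ y = (ip w y) • w := by
      intro w; funext i
      simp only [Matrix.mulVec, dotProduct, outer, Matrix.of_apply, Pi.smul_apply,
        smul_eq_mul, ip]
      rw [Finset.sum_mul]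
      exact Finset.sum_congr rfl fun x _ => by ring
    have : (outer u - outer v).mulVecLin y = (ip u y) • u - (ip v y) • v := by
      rw [Matrix.mulVecLin_apply, Matrix.sub_mulVec, hw, hw]
    rw [this]
    exact sub_mem
      (Submodule.smul_mem _ _ (Submodule.subset_span (by simp)))
      (Submodule.smul_mem _ _ (Submodule.subset_span (by simp)))
  have h1 : (outer u - outer v).rank ≤
      Module.finrank ℂ (Submodule.span ℂ ({u, v} : Set (ι → ℂ))) :=
    Submodule.finrank_mono hle
  refine h1.trans ?_
  refine (finrank_span_le_card _).trans ?_
  classical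
  have hss : ({u, v} : Set (ι → ℂ)).toFinset ⊆ {u, v} := by
    intro x hx; simp at hx; rcases hx with h|h <;> simp [h]
  have h2 : ({u, v} : Finset (ι → ℂ)).card ≤ 2 :=
    (Finset.card_insert_le _ _).trans (by simp)
  exact (Finset.card_le_card hss).trans h2

lemma ip_conj (u v : ι → ℂ) : ip v u = conj (ip u v) := by
  simp only [ip, map_sum, map_mul, RingHom.id_apply, Complex.conj_conj]
  exact Finset.sum_congr rfl fun x _ => by ring

lemma ip_self (u : ι → ℂ) (hu : IsUnitVec u) : ip u u = 1 := by
  have : ∀ x, conj (u x) * u x = (Complex.normSq (u x) : ℂ) := by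
    intro x; rw [mul_comm, Complex.mul_conj]
  rw [ip, Finset.sum_congr rfl fun x _ => this x, ← Complex.ofReal_sum, hu, Complex.ofReal_one]

lemma abs_sum_eq (lam : ι → ℝ) (h0 : ∑ i, lam i = 0)
    (hc : Fintype.card {i // lam i ≠ 0} ≤ 2) :
    ∑ i, |lam i| = Real.sqrt (2 * ∑ i, lam i ^ 2) := by
  classical
  set s := Finset.univ.filter (fun i => lam i ≠ 0) with hs
  have hcs : s.card ≤ 2 := by
    rwa [Fintype.card_subtype] at hc
  have hzero : ∀ i ∉ s, lam i = 0 := by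
    intro i hi; by_contra h; exact hi (Finset.mem_filter.2 ⟨Finset.mem_univ _, h⟩)
  have habs : ∑ i, |lam i| = ∑ i ∈ s, |lam i| :=
    (Finset.sum_subset (Finset.subset_univ s) (fun i _ hi => by rw [hzero i hi, abs_zero])).symm
  have hl : ∑ i ∈ s, lam i = 0 := by
    rw [Finset.sum_subset (Finset.subset_univ s) (fun i _ hi => hzero i hi), h0]
  have hsq : ∑ i, lam i ^ 2 = ∑ i ∈ s, lam i ^ 2 :=
    (Finset.sum_subset (Finset.subset_univ s) (fun i _ hi => by rw [hzero i hi]; ring)).symm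
  rw [habs, hsq]
  rcases (show s.card = 0 ∨ s.card = 1 ∨ s.card = 2 by omega) with h|h|h
  · rw [Finset.card_eq_zero.mp h]
    simp
  · obtain ⟨i, hi⟩ := Finset.card_eq_one.mp h
    rw [hi] at hl
    simp only [Finset.sum_singleton] at hl
    have : i ∈ s := by rw [hi]; exact Finset.mem_singleton_self i
    exact absurd hl (Finset.mem_filter.mp this).2
  · obtain ⟨i, j, hij, hij2⟩ := Finset.card_eq_two.mp h
    rw [hij2] at hl ⊢
    rw [Finset.sum_pair hij] at hl ⊢
    rw [Finset.sum_pair hij]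
    have hji : lam j = - lam i := by linarith
    rw [hji]
    have h4 : 2 * (lam i ^ 2 + (- lam i) ^ 2) = (2 * |lam i|) ^ 2 := by
      rw [mul_pow, sq_abs]; ring
    rw [h4, Real.sqrt_sq (by positivity), abs_neg]
    ring

theorem traceDist_outer (u v : ι → ℂ) (hu : IsUnitVec u) (hv : IsUnitVec v) :
    traceDist (outer u) (outer v) = Real.sqrt (1 - Complex.normSq (ip u v)) := by
  have hH : (outer u - outer v).IsHermitian := (outer_isHermitian u).sub (outer_isHermitian v)
  rw [traceDist, dif_pos hH]
  set lam := hH.eigenvalues with hlam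
  have ht : (outer u - outer v).trace = 0 := by
    rw [Matrix.trace_sub, trace_outer u hu, trace_outer v hv, sub_self]
  have h0 : ∑ i, lam i = 0 := by
    have h1 := trace_eq_sum_eigs hH
    rw [ht] at h1
    have h2 : ((∑ i, lam i : ℝ) : ℂ) = 0 := by push_cast; rw [← h1]
    exact_mod_cast h2
  have hsq : ∑ i, lam i ^ 2 = 2 * (1 - Complex.normSq (ip u v)) := by
    have h1 := trace_sq_eq_sum_eigs_sq hH
    have hx : ip u v * ip v u = (Complex.normSq (ip u v) : ℂ) := by
      rw [ip_conj u v, Complex.mul_conj]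
    have h2 : ((outer u - outer v) * (outer u - outer v)).trace
        = 2 - 2 * (Complex.normSq (ip u v) : ℂ) := by
      rw [Matrix.sub_mul, Matrix.mul_sub, Matrix.mul_sub, Matrix.trace_sub, Matrix.trace_sub,
        Matrix.trace_sub, trace_outer_mul_outer, trace_outer_mul_outer, trace_outer_mul_outer,
        trace_outer_mul_outer, ip_self u hu, ip_self v hv]
      rw [show ip v u * ip u v = ip u v * ip v u by ring, hx]
      ring
    rw [h2] at h1
    have h3 : ((∑ i, lam i ^ 2 : ℝ) : ℂ) = ((2 * (1 - Complex.normSq (ip u v)) : ℝ) : ℂ) := by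
      push_cast
      rw [← h1]
      ring
    exact_mod_cast h3
  have hcard : Fintype.card {i // lam i ≠ 0} ≤ 2 := by
    have := hH.rank_eq_card_non_zero_eigs
    rw [← this]
    exact rank_outer_sub_le u v
  rw [abs_sum_eq lam h0 hcard, hsq]
  have hx : 0 ≤ 1 - Complex.normSq (ip u v) := by
    have h5 : 0 ≤ ∑ i, lam i ^ 2 := Finset.sum_nonneg fun i _ => sq_nonneg _
    linarith [hsq ▸ h5]
  rw [show 2 * (2 * (1 - Complex.normSq (ip u v))) = (2:ℝ)^2 * (1 - Complex.normSq (ip u v))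
    by ring, Real.sqrt_mul (by positivity), Real.sqrt_sq (by norm_num)]
  ring

end TD

lemma sum_ext {α β M : Type*} [Fintype α] [Fintype β] [DecidableEq β] [AddCommMonoid M]
    (F : α → β) (hF : Function.Injective F) (g : β → M)
    (hg : ∀ b, (∀ a, F a ≠ b) → g b = 0) : ∑ b, g b = ∑ a, g (F a) := by
  classical
  rw [← Finset.sum_image (f := g) (g := F) (fun a _ b _ h => hF h)]
  symm
  apply Finset.sum_subset (Finset.subset_univ _)
  intro b _ hb
  apply hg
  intro a ha
  exact hb (Finset.mem_image.2 ⟨a, Finset.mem_univ _, ha⟩)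

/-! ### Padding -/

section Pad
variable (n d : ℕ) (hn : 2 ≤ n) (hd : 1 ≤ d)

def pad (p : Fin d × Fin d) : Fin n → Fin d :=
  fun j => if j = ⟨0, by omega⟩ then p.1 else if j = ⟨n - 1, by omega⟩ then p.2 else ⟨0, by omega⟩

lemma first_ne_last : (⟨0, by omega⟩ : Fin n) ≠ ⟨n - 1, by omega⟩ := by
  simp only [ne_eq, Fin.mk.injEq]
  omega

lemma pad_first (p : Fin d × Fin d) : pad n d hn hd p ⟨0, by omega⟩ = p.1 := if_pos rfl

lemma pad_last (p : Fin d × Fin d) : pad n d hn hd p ⟨n - 1, by omega⟩ = p.2 := by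
  rw [pad, if_neg (first_ne_last n d hn).symm, if_pos rfl]

lemma pad_injective : Function.Injective (pad n d hn hd) := by
  intro p q h
  have h1 := congrFun h ⟨0, by omega⟩
  have h2 := congrFun h ⟨n - 1, by omega⟩
  rw [pad_first, pad_first] at h1
  rw [pad_last, pad_last] at h2
  exact Prod.ext h1 h2

def Mid (i : Fin n → Fin d) : Prop :=
  ∀ j : Fin n, j ≠ ⟨0, by omega⟩ → j ≠ ⟨n - 1, by omega⟩ → i j = ⟨0, by omega⟩

lemma mid_pad (p : Fin d × Fin d) : Mid n d hn hd (pad n d hn hd p) := by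
  intro j h1 h2
  rw [pad, if_neg h1, if_neg h2]

lemma pad_eq_of_mid {i : Fin n → Fin d} (h : Mid n d hn hd i) :
    pad n d hn hd (i ⟨0, by omega⟩, i ⟨n - 1, by omega⟩) = i := by
  funext j
  by_cases h1 : j = ⟨0, by omega⟩
  · subst h1; rw [pad_first]
  · by_cases h2 : j = ⟨n - 1, by omega⟩
    · subst h2; rw [pad_last]
    · rw [pad, if_neg h1, if_neg h2, h j h1 h2]

lemma middle_eq (m : ℕ) :
    ((List.finRange (m + 2)).drop 1).dropLast
      = (List.finRange m).map (fun a => Fin.castSucc (Fin.succ a)) := by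
  rw [List.finRange_succ_last, List.finRange_succ]
  simp only [List.map_cons, List.map_map, List.cons_append, List.drop_succ_cons, List.drop_zero,
    List.dropLast_concat]
  rfl

lemma mem_middle {m : ℕ} (j : Fin (m + 2)) :
    j ∈ ((List.finRange (m + 2)).drop 1).dropLast ↔ 1 ≤ (j : ℕ) ∧ (j : ℕ) ≤ m := by
  rw [middle_eq]
  simp only [List.mem_map, List.mem_finRange, true_and]
  constructor
  · rintro ⟨a, rfl⟩
    simp [Fin.castSucc, Fin.succ]
  · rintro ⟨h1, h2⟩
    refine ⟨⟨(j : ℕ) - 1, by omega⟩, ?_⟩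
    ext
    simp [Fin.castSucc, Fin.succ]
    omega

lemma mem_middle' (j : Fin n) :
    j ∈ ((List.finRange n).drop 1).dropLast ↔
      j ≠ ⟨0, by omega⟩ ∧ j ≠ ⟨n - 1, by omega⟩ := by
  obtain ⟨m, rfl⟩ : ∃ m, n = m + 2 := ⟨n - 2, by omega⟩
  rw [mem_middle]
  simp only [ne_eq, Fin.ext_iff]
  omega

open scoped Classical in
noncomputable def padVec (ψ : Fin d × Fin d → ℂ) : (Fin n → Fin d) → ℂ :=
  fun i => if Mid n d hn hd i then ψ (i ⟨0, by omega⟩, i ⟨n - 1, by omega⟩) else 0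

lemma padVec_pad (ψ : Fin d × Fin d → ℂ) (p : Fin d × Fin d) :
    padVec n d hn hd ψ (pad n d hn hd p) = ψ p := by
  rw [padVec, if_pos (mid_pad n d hn hd p), pad_first, pad_last]

lemma padVec_zero {ψ : Fin d × Fin d → ℂ} {i : Fin n → Fin d} (h : ¬ Mid n d hn hd i) :
    padVec n d hn hd ψ i = 0 := by
  rw [padVec, if_neg h]

lemma not_mid {i : Fin n → Fin d} (h : ∀ p, pad n d hn hd p ≠ i) : ¬ Mid n d hn hd i :=
  fun hm => h _ (pad_eq_of_mid n d hn hd hm)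

lemma padVec_unit (ψ : Fin d × Fin d → ℂ) (hψ : IsUnitVec ψ) :
    IsUnitVec (padVec n d hn hd ψ) := by
  unfold IsUnitVec at *
  rw [sum_ext (pad n d hn hd) (pad_injective n d hn hd)
      (fun i => Complex.normSq (padVec n d hn hd ψ i))
      (fun i hi => by
        simp only [padVec_zero n d hn hd (not_mid n d hn hd hi), Complex.normSq_zero])]
  rw [Finset.sum_congr rfl fun p _ => by rw [padVec_pad n d hn hd ψ p]]
  exact hψ

def padN (N : ℕ) (x : Fin N → Fin d × Fin d) : Fin N → Fin n → Fin d :=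
  fun i => pad n d hn hd (x i)

lemma padN_injective (N : ℕ) : Function.Injective (padN n d hn hd N) :=
  fun x y h => funext fun i => pad_injective n d hn hd (congrFun h i)

lemma not_midN {N : ℕ} {y : Fin N → Fin n → Fin d} (h : ∀ x, padN n d hn hd N x ≠ y) :
    ∃ i, ¬ Mid n d hn hd (y i) := by
  by_contra hc
  push_neg at hc
  exact h (fun i => (y i ⟨0, by omega⟩, y i ⟨n - 1, by omega⟩))
    (funext fun i => pad_eq_of_mid n d hn hd (hc i))

lemma ip_padVec (ψ : Fin d × Fin d → ℂ) (Φ : (Fin n → Fin d) → ℂ) :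
    ip (padVec n d hn hd ψ) Φ = ∑ p, conj (ψ p) * Φ (pad n d hn hd p) := by
  rw [ip, sum_ext (pad n d hn hd) (pad_injective n d hn hd)
      (fun i => conj (padVec n d hn hd ψ i) * Φ i)
      (fun i hi => by
        simp only [padVec_zero n d hn hd (not_mid n d hn hd hi), map_zero, zero_mul])]
  exact Finset.sum_congr rfl fun p _ => by rw [padVec_pad n d hn hd ψ p]

end Pad

lemma prod_ite_one_zero {r : ℕ} {β : Type*} (L : List β) (P : β → Prop) [DecidablePred P] :
    (List.map (fun j => if P j then (1 : Matrix (Fin r) (Fin r) ℂ) else 0) L).prod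
      = if ∀ j ∈ L, P j then 1 else 0 := by
  induction L with
  | nil => simp
  | cons a L ih =>
    rw [List.map_cons, List.prod_cons, ih]
    by_cases h : P a
    · by_cases h2 : ∀ j ∈ L, P j
      · simp [h, h2, List.forall_mem_cons]
      · simp [h, h2, List.forall_mem_cons]
    · simp [h, List.forall_mem_cons]

lemma isMPS_padVec (n r d : ℕ) (hn : 2 ≤ n) (hd : 1 ≤ d) (h0 : 0 < n)
    (ψ : Fin d × Fin d → ℂ) (hrank : schmidtRank ψ ≤ r) :
    IsMPS n r d h0 (padVec n d hn hd ψ) := by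
  obtain ⟨B, C, hBC⟩ := rank_factor (Matrix.of fun i j : Fin d => ψ (i, j)) hrank
  refine ⟨fun x => Matrix.of fun _ k => B x k,
    fun _ x => if x = (⟨0, by omega⟩ : Fin d) then 1 else 0,
    fun y => Matrix.of fun k _ => C k y, fun i => ?_⟩
  beta_reduce
  rw [prod_ite_one_zero (((List.finRange n).drop 1).dropLast)
    (fun j => i j = (⟨0, by omega⟩ : Fin d))]
  by_cases hm : Mid n d hn hd i
  · have hall : ∀ j ∈ ((List.finRange n).drop 1).dropLast, i j = (⟨0, by omega⟩ : Fin d) :=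
      fun j hj => hm j ((mem_middle' n d hn j).mp hj).1 ((mem_middle' n d hn j).mp hj).2
    rw [if_pos hall, Matrix.mul_one, Matrix.mul_apply, padVec, if_pos hm]
    have hBCe := congrFun (congrFun hBC (i ⟨0, by omega⟩)) (i ⟨n - 1, by omega⟩)
    simp only [Matrix.of_apply] at hBCe
    rw [hBCe, Matrix.mul_apply]
    exact Finset.sum_congr rfl fun k _ => rfl
  · have hnall : ¬ ∀ j ∈ ((List.finRange n).drop 1).dropLast,
        i j = (⟨0, by omega⟩ : Fin d) := by
      intro hall
      apply hm
      intro j h1 h2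
      exact hall j ((mem_middle' n d hn j).mpr ⟨h1, h2⟩)
    rw [if_neg hnall, Matrix.mul_zero, Matrix.zero_mul, Matrix.zero_apply, padVec, if_neg hm]

lemma schmidtRank_restrict (n r d : ℕ) (hn : 2 ≤ n) (hd : 1 ≤ d) (h0 : 0 < n)
    (Φ : (Fin n → Fin d) → ℂ) (hΦ : IsMPS n r d h0 Φ) :
    schmidtRank (fun p => Φ (pad n d hn hd p)) ≤ r := by
  obtain ⟨A₁, A, Aₙ, hA⟩ := hΦ
  set L := ((List.finRange n).drop 1).dropLast with hL
  set Pmid := (List.map (fun j => A j (⟨0, by omega⟩ : Fin d)) L).prod with hP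
  have key : ∀ p : Fin d × Fin d, Φ (pad n d hn hd p) = (A₁ p.1 * Pmid * Aₙ p.2) 0 0 := by
    intro p
    rw [hA (pad n d hn hd p)]
    have h3 : List.map (fun j => A j (pad n d hn hd p j)) L
        = List.map (fun j => A j (⟨0, by omega⟩ : Fin d)) L := by
      apply List.map_congr_left
      intro j hj
      have hj2 := (mem_middle' n d hn j).mp hj
      rw [show pad n d hn hd p j = (⟨0, by omega⟩ : Fin d) by
        rw [pad, if_neg hj2.1, if_neg hj2.2]]
    rw [show pad n d hn hd p ⟨0, h0⟩ = p.1 from pad_first n d hn hd p,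
      show pad n d hn hd p ⟨n - 1, Nat.sub_lt h0 Nat.one_pos⟩ = p.2 from pad_last n d hn hd p,
      h3, ← hP]
  have hM : (Matrix.of fun a b : Fin d => Φ (pad n d hn hd (a, b)))
      = (Matrix.of fun (a : Fin d) (k : Fin r) => A₁ a 0 k) *
        (Matrix.of fun (k : Fin r) (b : Fin d) => (Pmid * Aₙ b) k 0) := by
    ext a b
    rw [Matrix.of_apply, key (a, b), Matrix.mul_assoc, Matrix.mul_apply, Matrix.mul_apply]
    exact Finset.sum_congr rfl fun k _ => rfl
  show (Matrix.of fun a b : Fin d => Φ (pad n d hn hd (a, b))).rank ≤ r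
  rw [hM]
  exact (Matrix.rank_mul_le_right _ _).trans ((Matrix.rank_le_card_height _).trans (by simp))

lemma acc_submatrix (n d N : ℕ) (hn : 2 ≤ n) (hd : 1 ≤ d)
    (T : Matrix (Fin N → Fin n → Fin d) (Fin N → Fin n → Fin d) ℂ) (ψ : Fin d × Fin d → ℂ) :
    (T.submatrix (padN n d hn hd N) (padN n d hn hd N) * tpow (outer ψ) N).trace
      = (T * tpow (outer (padVec n d hn hd ψ)) N).trace := by
  classical
  set Ψ := padVec n d hn hd ψ with hΨ
  have hz : ∀ i, ¬ Mid n d hn hd i → Ψ i = 0 := fun i h => padVec_zero n d hn hd h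
  simp only [Matrix.trace, Matrix.diag, Matrix.mul_apply, tpow, Matrix.of_apply,
    Matrix.submatrix_apply, outer]
  symm
  have e1 : (∑ x, ∑ y, T x y * ∏ i, (Ψ (y i) * conj (Ψ (x i))))
      = ∑ x', ∑ y, T (padN n d hn hd N x') y * ∏ i, (Ψ (y i) * conj (Ψ (padN n d hn hd N x' i))) := by
    apply sum_ext (padN n d hn hd N) (padN_injective n d hn hd N)
      (fun x => ∑ y, T x y * ∏ i, (Ψ (y i) * conj (Ψ (x i))))
    intro x hx
    obtain ⟨i0, hi0⟩ := not_midN n d hn hd hx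
    apply Finset.sum_eq_zero
    intro y _
    have : (∏ i, (Ψ (y i) * conj (Ψ (x i)))) = 0 :=
      Finset.prod_eq_zero (Finset.mem_univ i0) (by rw [hz _ hi0]; simp)
    rw [this, mul_zero]
  rw [e1]
  apply Finset.sum_congr rfl
  intro x' _
  have e2 : (∑ y, T (padN n d hn hd N x') y * ∏ i, (Ψ (y i) * conj (Ψ (padN n d hn hd N x' i))))
      = ∑ y', T (padN n d hn hd N x') (padN n d hn hd N y') *
          ∏ i, (Ψ (padN n d hn hd N y' i) * conj (Ψ (padN n d hn hd N x' i))) := by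
    apply sum_ext (padN n d hn hd N) (padN_injective n d hn hd N)
      (fun y => T (padN n d hn hd N x') y * ∏ i, (Ψ (y i) * conj (Ψ (padN n d hn hd N x' i))))
    intro y hy
    obtain ⟨i0, hi0⟩ := not_midN n d hn hd hy
    have : (∏ i, (Ψ (y i) * conj (Ψ (padN n d hn hd N x' i)))) = 0 :=
      Finset.prod_eq_zero (Finset.mem_univ i0) (by rw [hz _ hi0]; simp)
    rw [this, mul_zero]
  rw [e2]
  apply Finset.sum_congr rfl
  intro y' _
  congr 1
  apply Finset.prod_congr rfl
  intro i _
  rw [show Ψ (padN n d hn hd N y' i) = ψ (y' i) from padVec_pad n d hn hd ψ (y' i),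
    show Ψ (padN n d hn hd N x' i) = ψ (x' i) from padVec_pad n d hn hd ψ (x' i)]


/-- Lemma `lemma-416002`: a tester for `MPS(r,n)_ε` yields a tester for
`SchmidtRank(r)_ε` with the same parameters, via padding. -/
theorem stmt_15 (n r d N : ℕ) (hn : 2 ≤ n) (hr : 1 ≤ r) (hd : 1 ≤ d) (hN : 1 ≤ N)
    (ε : ℝ) (hε : ε ∈ Set.Ioc (0 : ℝ) 1)
    (c s : ℝ) (hs0 : 0 ≤ s) (hsc : s < c) (hc1 : c ≤ 1)
    (T : Matrix (Fin N → (Fin n → Fin d)) (Fin N → (Fin n → Fin d)) ℂ)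
    (hT : IsTester T)
    (hyes : ∀ Ψ : (Fin n → Fin d) → ℂ, IsUnitVec Ψ → IsMPS n r d (by omega) Ψ →
      c ≤ acc T (outer Ψ))
    (hno : ∀ Ψ : (Fin n → Fin d) → ℂ, IsUnitVec Ψ →
      (∀ Φ : (Fin n → Fin d) → ℂ, IsUnitVec Φ → IsMPS n r d (by omega) Φ →
        ε ≤ traceDist (outer Ψ) (outer Φ)) →
      acc T (outer Ψ) ≤ s) :
    ∃ T' : Matrix (Fin N → Fin d × Fin d) (Fin N → Fin d × Fin d) ℂ,
      IsTester T' ∧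
      (∀ ψ : Fin d × Fin d → ℂ, IsUnitVec ψ → schmidtRank ψ ≤ r →
        c ≤ acc T' (outer ψ)) ∧
      (∀ ψ : Fin d × Fin d → ℂ, IsUnitVec ψ →
        (∀ φ : Fin d × Fin d → ℂ, IsUnitVec φ → schmidtRank φ ≤ r →
          ε ≤ traceDist (outer ψ) (outer φ)) →
        acc T' (outer ψ) ≤ s) := by
  classical
  refine ⟨T.submatrix (padN n d hn hd N) (padN n d hn hd N),
    ⟨hT.1.submatrix _, ?_⟩, ?_, ?_⟩
  · have he : (1 : Matrix (Fin N → Fin d × Fin d) (Fin N → Fin d × Fin d) ℂ)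
        - T.submatrix (padN n d hn hd N) (padN n d hn hd N)
        = ((1 : Matrix (Fin N → Fin n → Fin d) (Fin N → Fin n → Fin d) ℂ) - T).submatrix
            (padN n d hn hd N) (padN n d hn hd N) := by
      ext x y
      simp only [Matrix.sub_apply, Matrix.submatrix_apply, Matrix.one_apply,
        (padN_injective n d hn hd N).eq_iff]
    rw [he]
    exact hT.2.submatrix _
  · intro ψ hψ hrank
    have hu := padVec_unit n d hn hd ψ hψ
    have hmps := isMPS_padVec n r d hn hd (by omega) ψ hrank
    have h1 := hyes _ hu hmps
    have h2 : acc (T.submatrix (padN n d hn hd N) (padN n d hn hd N)) (outer ψ)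
        = acc T (outer (padVec n d hn hd ψ)) := by
      unfold acc
      rw [acc_submatrix n d N hn hd T ψ]
    rw [h2]
    exact h1
  · intro ψ hψ hfar
    have hu := padVec_unit n d hn hd ψ hψ
    have hfar' : ∀ Φ : (Fin n → Fin d) → ℂ, IsUnitVec Φ → IsMPS n r d (by omega) Φ →
        ε ≤ traceDist (outer (padVec n d hn hd ψ)) (outer Φ) := by
      intro Φ hΦu hΦm
      set φ₀ : Fin d × Fin d → ℂ := fun p => Φ (pad n d hn hd p) with hφ₀
      have hrank0 : schmidtRank φ₀ ≤ r := schmidtRank_restrict n r d hn hd _ Φ hΦm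
      have hipe : ip (padVec n d hn hd ψ) Φ = ∑ p, conj (ψ p) * φ₀ p :=
        ip_padVec n d hn hd ψ Φ
      have htd : traceDist (outer (padVec n d hn hd ψ)) (outer Φ)
          = Real.sqrt (1 - Complex.normSq (ip (padVec n d hn hd ψ) Φ)) :=
        traceDist_outer _ Φ hu hΦu
      have hsum1 : ∑ p, Complex.normSq (φ₀ p) ≤ 1 := by
        have himg : ∑ p, Complex.normSq (φ₀ p)
            = ∑ i ∈ Finset.univ.image (pad n d hn hd), Complex.normSq (Φ i) := by
          rw [Finset.sum_image (fun a _ b _ h => pad_injective n d hn hd h)]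
        rw [himg, ← hΦu]
        exact Finset.sum_le_sum_of_subset_of_nonneg (Finset.subset_univ _)
          (fun i _ _ => Complex.normSq_nonneg _)
      by_cases hz0 : ∀ p, φ₀ p = 0
      · have hip0 : ip (padVec n d hn hd ψ) Φ = 0 := by
          rw [hipe]
          exact Finset.sum_eq_zero fun p _ => by rw [hz0 p, mul_zero]
        rw [htd, hip0]
        simpa using hε.2
      · push_neg at hz0
        obtain ⟨p0, hp0⟩ := hz0
        set t2 := ∑ p, Complex.normSq (φ₀ p) with ht2
        have ht2pos : 0 < t2 := Finset.sum_pos' (fun p _ => Complex.normSq_nonneg _)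
          ⟨p0, Finset.mem_univ _, Complex.normSq_pos.mpr hp0⟩
        set t := Real.sqrt t2 with htdef
        have htpos : 0 < t := Real.sqrt_pos.mpr ht2pos
        have htt : t * t = t2 := Real.mul_self_sqrt ht2pos.le
        have htne : (t : ℂ) ≠ 0 := by
          exact_mod_cast Complex.ofReal_ne_zero.mpr (ne_of_gt htpos)
        set φ : Fin d × Fin d → ℂ := fun p => (t : ℂ)⁻¹ * φ₀ p with hφdef
        have hφu : IsUnitVec φ := by
          unfold IsUnitVec
          have hterm : ∀ p, Complex.normSq (φ p) = t2⁻¹ * Complex.normSq (φ₀ p) := by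
            intro p
            show Complex.normSq ((t : ℂ)⁻¹ * φ₀ p) = t2⁻¹ * Complex.normSq (φ₀ p)
            rw [Complex.normSq_mul, ← Complex.ofReal_inv, Complex.normSq_ofReal]
            congr 1
            rw [← mul_inv, htt]
          rw [Finset.sum_congr rfl fun p _ => hterm p, ← Finset.mul_sum, ← ht2,
            inv_mul_cancel₀ (ne_of_gt ht2pos)]
        have hφrank : schmidtRank φ ≤ r := by
          have hMeq : (Matrix.of fun a b : Fin d => φ (a, b))
              = ((t : ℂ)⁻¹ • (1 : Matrix (Fin d) (Fin d) ℂ)) *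
                (Matrix.of fun a b : Fin d => φ₀ (a, b)) := by
            ext a b
            rw [Matrix.smul_mul, Matrix.one_mul, Matrix.smul_apply, Matrix.of_apply,
              Matrix.of_apply, smul_eq_mul]
          show (Matrix.of fun a b : Fin d => φ (a, b)).rank ≤ r
          rw [hMeq]
          exact (Matrix.rank_mul_le_right _ _).trans hrank0
        have hfar2 := hfar φ hφu hφrank
        have htd2 : traceDist (outer ψ) (outer φ)
            = Real.sqrt (1 - Complex.normSq (ip ψ φ)) :=
          traceDist_outer ψ φ hψ hφu
        have hip0 : (∑ p, conj (ψ p) * φ₀ p) = (t : ℂ) * ip ψ φ := by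
          rw [ip, Finset.mul_sum]
          apply Finset.sum_congr rfl
          intro p _
          show conj (ψ p) * φ₀ p = (t : ℂ) * (conj (ψ p) * ((t : ℂ)⁻¹ * φ₀ p))
          field_simp
        have hns : Complex.normSq (ip (padVec n d hn hd ψ) Φ)
            = t2 * Complex.normSq (ip ψ φ) := by
          rw [hipe, hip0, Complex.normSq_mul, Complex.normSq_ofReal, htt]
        have hle : Complex.normSq (ip (padVec n d hn hd ψ) Φ) ≤ Complex.normSq (ip ψ φ) := by
          rw [hns]
          nlinarith [Complex.normSq_nonneg (ip ψ φ), ht2pos.le, hsum1]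
        rw [htd]
        calc ε ≤ Real.sqrt (1 - Complex.normSq (ip ψ φ)) := htd2 ▸ hfar2
          _ ≤ Real.sqrt (1 - Complex.normSq (ip (padVec n d hn hd ψ) Φ)) :=
            Real.sqrt_le_sqrt (by linarith)
    have h3 := hno _ hu hfar'
    have h2 : acc (T.submatrix (padN n d hn hd N) (padN n d hn hd N)) (outer ψ)
        = acc T (outer (padVec n d hn hd ψ)) := by
      unfold acc
      rw [acc_submatrix n d N hn hd T ψ]
    rw [h2]
    exact h3


end PaperStmt
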